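/- Let X be a separable Banach space, Y a Banach space, G ⊆ X open, and f : G → Y an arbitrary mapping. Then there exists a σ-directionally porous set A ⊆ G such that for every x ∈ G \ A: if f is Lipschitz at x and the one-sided directional derivative f'₊(x,u) exists for all u in a set S_x ⊆ X whose linear span is dense in X, then f is Gâteaux differentiable at x. -/

import Mathlib

open Filter Topology Set Metric

section Defs
variable {X Y : Type*} [NormedAddCommGroup X] [NormedSpace ℝ X]
  [NormedAddCommGroup Y] [NormedSpace ℝ Y]

/-- One-sided directional derivative: `f'₊(x,v) = L`. -/
def HasPosDirDeriv (f : X → Y) (x v : X) (L : Y) : Prop :=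
  Tendsto (fun t : ℝ => t⁻¹ • (f (x + t • v) - f x)) (𝓝[>] (0:ℝ)) (𝓝 L)

/-- Two-sided directional derivative: `f'(x,v) = L`. -/
def HasDirDeriv (f : X → Y) (x v : X) (L : Y) : Prop :=
  Tendsto (fun t : ℝ => t⁻¹ • (f (x + t • v) - f x)) (𝓝[≠] (0:ℝ)) (𝓝 L)

/-- One-sided Hadamard directional derivative: `f'_{H+}(x,v) = L`. -/
def HasHadamardPosDirDeriv (f : X → Y) (x v : X) (L : Y) : Prop :=
  Tendsto (fun p : X × ℝ => p.2⁻¹ • (f (x + p.2 • p.1) - f x))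
    ((𝓝 v) ×ˢ (𝓝[>] (0:ℝ))) (𝓝 L)

/-- Two-sided Hadamard directional derivative: `f'_H(x,v) = L`. -/
def HasHadamardDirDeriv (f : X → Y) (x v : X) (L : Y) : Prop :=
  Tendsto (fun p : X × ℝ => p.2⁻¹ • (f (x + p.2 • p.1) - f x))
    ((𝓝 v) ×ˢ (𝓝[≠] (0:ℝ))) (𝓝 L)

/-- `f` is Lipschitz at the point `x`: `limsup_{y→x} ‖f y - f x‖/‖y-x‖ < ∞`. -/
def LipschitzAtPt (f : X → Y) (x : X) : Prop :=
  ∃ K δ : ℝ, 0 < δ ∧ ∀ y, ‖y - x‖ < δ → ‖f y - f x‖ ≤ K * ‖y - x‖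

/-- `A` is porous at `x` in the direction `v`. -/
def PorousAt (A : Set X) (x v : X) : Prop :=
  ∃ p > (0:ℝ), ∃ t : ℕ → ℝ, (∀ n, 0 < t n) ∧ Tendsto t atTop (𝓝 0) ∧
    ∀ n, ball (x + t n • v) (p * t n) ∩ A = ∅

/-- `A` is directionally porous. -/
def DirectionallyPorous (A : Set X) : Prop :=
  ∀ x ∈ A, ∃ v : X, v ≠ 0 ∧ PorousAt A x v

/-- `A` is σ-directionally porous. -/
def SigmaDirectionallyPorous (A : Set X) : Prop :=
  ∃ s : ℕ → Set X, (∀ n, DirectionallyPorous (s n)) ∧ A = ⋃ n, s n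

/-- The open cone `C(x,v,δ)`. -/
def Cone (x v : X) (δ : ℝ) : Set X :=
  {y : X | y ≠ x ∧ ‖v - ‖y - x‖⁻¹ • (y - x)‖ < δ}

/-- `f` is Hadamard differentiable at `x` with derivative `L`: the difference quotients
converge to `L v` uniformly in `v` from each compact set. -/
def HadamardDifferentiableAt (f : X → Y) (x : X) (L : X →L[ℝ] Y) : Prop :=
  ∀ C : Set X, IsCompact C →
    TendstoUniformlyOn (fun (t : ℝ) (v : X) => t⁻¹ • (f (x + t • v) - f x))
      (fun v => L v) (𝓝[≠] (0:ℝ)) C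

end Defs

/-!
Fix rational constants `K, δ` and look at points `x` where `f` is `K`-Lipschitz on the
`δ`-ball. A one-sided directional derivative `f'₊(x, v) = L` can go wrong in three ways: it is
not uniform on cones `{x + t • w | w ≈ v}`, it does not give `f'₊(x, -v) = -L`, or it is not
additive. Each failure, quantified with rational parameters and directions taken from a dense
sequence, defines a set that is directionally porous: if `y ≈ x + t • w` witnesses the failure
at scale `t`, then any point `z` of the same set in a ball `B(x + t • u, p t)` (for a suitable
direction `u`) would, through its own Lipschitz and cone estimates, force the approximation at
`y` to hold.

Outside these countably many sets the one-sided derivative is uniform on cones, odd and additive.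
Hence it exists on the span of `S`, then, by uniformity and completeness of `Y`, on its closure
`X`, where it is linear and bounded by `K`; oddness makes it two-sided.
-/

section Lipschitz

variable {X Y : Type*} [NormedAddCommGroup X] [NormedAddCommGroup Y] {f : X → Y} {x : X}
  {K K' δ δ' : ℝ}

def LipschitzAtWith (K δ : ℝ) (f : X → Y) (x : X) : Prop :=
  ∀ y, ‖y - x‖ < δ → ‖f y - f x‖ ≤ K * ‖y - x‖

theorem LipschitzAtWith.norm_sub_le (h : LipschitzAtWith K δ f x) (hK : 0 ≤ K) {y : X} {s : ℝ}
    (hy : ‖y - x‖ ≤ s) (hs : s < δ) : ‖f y - f x‖ ≤ K * s :=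
  (h y (hy.trans_lt hs)).trans (mul_le_mul_of_nonneg_left hy hK)

theorem LipschitzAtWith.mono (h : LipschitzAtWith K δ f x) (hK : K ≤ K') (hδ : δ' ≤ δ) :
    LipschitzAtWith K' δ' f x :=
  fun y hy => (h y (hy.trans_le hδ)).trans (mul_le_mul_of_nonneg_right hK (norm_nonneg _))

theorem LipschitzAtPt.exists_rat (h : LipschitzAtPt f x) :
    ∃ K δ : ℚ, 0 < K ∧ 0 < δ ∧ LipschitzAtWith K δ f x := by
  obtain ⟨K, δ, hδ, hLip⟩ := h
  obtain ⟨K', hK'⟩ := exists_rat_gt (max K 0)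
  obtain ⟨δ', hδ'0, hδ'⟩ := exists_rat_btwn hδ
  refine ⟨K', δ', by exact_mod_cast (le_max_right _ _).trans_lt hK', by exact_mod_cast hδ'0,
    LipschitzAtWith.mono hLip ((le_max_left _ _).trans hK'.le) hδ'.le⟩

end Lipschitz

section Basic

variable {X Y : Type*} [NormedAddCommGroup X] [NormedSpace ℝ X]
  [NormedAddCommGroup Y] [NormedSpace ℝ Y]
  {f : X → Y} {x v w : X} {L : Y} {K δ ε ε' r r' ρ ρ' : ℝ}

/-- With `ρ = 0` this quantifies `HasPosDirDeriv f x v L` (see `hasPosDirDeriv_iff_coneApprox`);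
with `ρ > 0` it quantifies the one-sided Hadamard derivative. -/
def ConeApprox (f : X → Y) (x v : X) (L : Y) (ε r ρ : ℝ) : Prop :=
  ∀ t ∈ Ioo 0 r, ∀ y, ‖y - (x + t • v)‖ ≤ ρ * t → ‖f y - f x - t • L‖ ≤ ε * t

theorem ConeApprox.mono (h : ConeApprox f x v L ε r ρ) (hε : ε ≤ ε') (hr : r' ≤ r)
    (hρ : ρ' ≤ ρ) : ConeApprox f x v L ε' r' ρ' := fun t ht y hy =>
  (h t ⟨ht.1, ht.2.trans_le hr⟩ y (hy.trans (mul_le_mul_of_nonneg_right hρ ht.1.le))).trans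
    (mul_le_mul_of_nonneg_right hε ht.1.le)

theorem ConeApprox.of_norm_sub_add_le (h : ConeApprox f x w L ε r ρ) (hv : ‖v - w‖ + ρ' ≤ ρ) :
    ConeApprox f x v L ε r ρ' := by
  intro t ht y hy
  refine h t ht y ?_
  calc ‖y - (x + t • w)‖ = ‖(y - (x + t • v)) + t • (v - w)‖ := by
        rw [smul_sub]; congr 1; abel
    _ ≤ ρ' * t + t * ‖v - w‖ := by
        grw [norm_add_le, hy, norm_smul, Real.norm_of_nonneg ht.1.le]
    _ ≤ ρ * t := by nlinarith [ht.1]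

theorem norm_sub_smul_eq_mul_norm {A : Y} {t : ℝ} (ht : 0 < t) :
    ‖A - t • L‖ = t * ‖t⁻¹ • A - L‖ := by
  conv_lhs => rw [← smul_inv_smul₀ ht.ne' A, ← smul_sub]
  rw [norm_smul, Real.norm_of_nonneg ht.le]

theorem coneApprox_zero_iff : ConeApprox f x v L ε r 0 ↔
    ∀ t ∈ Ioo 0 r, ‖t⁻¹ • (f (x + t • v) - f x) - L‖ ≤ ε := by
  refine forall₂_congr fun t ht => ?_
  simp only [zero_mul, norm_le_zero_iff, sub_eq_zero, forall_eq,
    norm_sub_smul_eq_mul_norm ht.1, mul_comm ε, mul_le_mul_iff_right₀ ht.1]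

theorem hasPosDirDeriv_iff_coneApprox :
    HasPosDirDeriv f x v L ↔ ∀ ε > 0, ∃ r > 0, ConeApprox f x v L ε r 0 := by
  simp only [coneApprox_zero_iff, HasPosDirDeriv, Metric.tendsto_nhdsWithin_nhds, dist_eq_norm,
    sub_zero, mem_Ioi, Real.norm_eq_abs]
  constructor
  · intro h ε hε
    obtain ⟨r, hr, h⟩ := h ε hε
    exact ⟨r, hr, fun t ht => (h ht.1 (by rw [abs_of_pos ht.1]; exact ht.2)).le⟩
  · intro h ε hε
    obtain ⟨r, hr, h⟩ := h (ε / 2) (half_pos hε)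
    refine ⟨r, hr, fun t ht htr => (h t ⟨ht, ?_⟩).trans_lt (half_lt_self hε)⟩
    rwa [abs_of_pos ht] at htr

theorem exists_tendsto_of_forall_eventually_dist_le {α E : Type*} [PseudoMetricSpace E]
    [CompleteSpace E] {l : Filter α} [l.NeBot] {g : α → E}
    (h : ∀ ε > 0, ∃ c, ∀ᶠ a in l, dist (g a) c ≤ ε) : ∃ c, Tendsto g l (𝓝 c) := by
  refine cauchy_map_iff_exists_tendsto.1 (Metric.cauchy_iff.2 ⟨inferInstance, fun ε hε => ?_⟩)
  obtain ⟨c, hc⟩ := h (ε / 3) (by positivity)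
  refine ⟨g '' {a | dist (g a) c ≤ ε / 3}, image_mem_map hc, ?_⟩
  rintro _ ⟨a, ha, rfl⟩ _ ⟨b, hb, rfl⟩
  calc dist (g a) (g b) ≤ dist (g a) c + dist (g b) c := dist_triangle_right _ _ _
    _ < ε := by linarith [show dist (g a) c ≤ ε / 3 from ha, show dist (g b) c ≤ ε / 3 from hb]

theorem exists_hasPosDirDeriv_of_forall_coneApprox [CompleteSpace Y]
    (h : ∀ ε > 0, ∃ L, ∃ r > 0, ConeApprox f x v L ε r 0) : ∃ L, HasPosDirDeriv f x v L := by
  refine exists_tendsto_of_forall_eventually_dist_le fun ε hε => ?_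
  obtain ⟨L, r, hr, hL⟩ := h ε hε
  exact ⟨L, eventually_of_mem (Ioo_mem_nhdsGT hr) fun t ht =>
    dist_eq_norm _ L ▸ coneApprox_zero_iff.1 hL t ht⟩

theorem HasPosDirDeriv.unique {L' : Y} (h : HasPosDirDeriv f x v L)
    (h' : HasPosDirDeriv f x v L') : L = L' :=
  tendsto_nhds_unique h h'

theorem hasPosDirDeriv_zero : HasPosDirDeriv f x 0 0 := by
  simp [HasPosDirDeriv]

theorem HasPosDirDeriv.smul (h : HasPosDirDeriv f x v L) {c : ℝ} (hc : 0 < c) :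
    HasPosDirDeriv f x (c • v) (c • L) := by
  have hmul := tendsto_comap (f := (c * ·)) (x := 𝓝[>] (0 : ℝ))
  rw [comap_mulLeft_nhdsGT_zero hc] at hmul
  refine ((h.comp hmul).const_smul c).congr fun t => ?_
  simp only [Function.comp_apply, smul_smul, mul_inv_rev, mul_comm t c]
  rw [mul_left_comm, mul_inv_cancel₀ hc.ne', mul_one]

theorem HasPosDirDeriv.norm_le (h : HasPosDirDeriv f x v L) (hLip : LipschitzAtWith K δ f x)
    (hδ : 0 < δ) : ‖L‖ ≤ K * ‖v‖ := by
  refine le_of_tendsto h.norm (eventually_of_mem (Ioo_mem_nhdsGT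
    (show (0 : ℝ) < δ / (‖v‖ + 1) by positivity)) fun t ⟨ht, htr⟩ => ?_)
  have htv : ‖(x + t • v) - x‖ = t * ‖v‖ := by
    rw [add_sub_cancel_left, norm_smul, Real.norm_of_nonneg ht.le]
  have hsmall : t * ‖v‖ < δ := by
    have := (lt_div_iff₀ (by positivity)).1 htr
    nlinarith [norm_nonneg v]
  have hlip := hLip (x + t • v) (htv ▸ hsmall)
  rw [htv] at hlip
  rw [norm_smul, Real.norm_of_nonneg (inv_pos.2 ht).le]
  calc t⁻¹ * ‖f (x + t • v) - f x‖ ≤ t⁻¹ * (K * (t * ‖v‖)) := by gcongr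
    _ = K * ‖v‖ := by field_simp

theorem hasDirDeriv_of_hasPosDirDeriv_neg (h : HasPosDirDeriv f x v L)
    (h' : HasPosDirDeriv f x (-v) (-L)) : HasDirDeriv f x v L := by
  rw [HasDirDeriv, ← nhdsLT_sup_nhdsGT, tendsto_sup]
  refine ⟨?_, h⟩
  have := (h'.comp (neg_zero (G := ℝ) ▸ tendsto_neg_nhdsLT)).neg
  simpa [Function.comp_def, smul_neg, neg_smul] using this

end Basic

section Porosity

variable {X : Type*} [NormedAddCommGroup X] [NormedSpace ℝ X] {A B : Set X}

theorem DirectionallyPorous.mono (hA : DirectionallyPorous A) (hBA : B ⊆ A) :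
    DirectionallyPorous B := by
  intro x hx
  obtain ⟨v, hv, p, hp, t, ht, htt, hball⟩ := hA x (hBA hx)
  exact ⟨v, hv, p, hp, t, ht, htt, fun n =>
    subset_eq_empty (inter_subset_inter_right _ hBA) (hball n)⟩

/-- The direction is automatically nonzero: for `v = 0` the ball around `x + t • v = x`
would meet `A` at `x`. -/
theorem DirectionallyPorous.of_forall
    (h : ∀ x ∈ A, ∃ v : X, ∃ p > 0, ∀ c > 0, ∃ t ∈ Ioo 0 c,
      ∀ z ∈ ball (x + t • v) (p * t), z ∉ A) :
    DirectionallyPorous A := by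
  intro x hx
  obtain ⟨v, p, hp, hv⟩ := h x hx
  choose t ht hball using fun n : ℕ => hv (1 / (n + 1)) Nat.one_div_pos_of_nat
  refine ⟨v, fun hv0 => ?_, p, hp, t, fun n => (ht n).1, ?_, fun n => ?_⟩
  · subst hv0
    exact hball 0 x (by simpa using mul_pos hp (ht 0).1) hx
  · exact squeeze_zero (fun n => (ht n).1.le) (fun n => (ht n).2.le)
      tendsto_one_div_add_atTop_nhds_zero_nat
  · exact eq_empty_iff_forall_notMem.2 fun z hz => hball n z hz.1 hz.2

theorem DirectionallyPorous.sigmaDirectionallyPorous (h : DirectionallyPorous A) :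
    SigmaDirectionallyPorous A :=
  ⟨fun _ => A, fun _ => h, (iUnion_const A).symm⟩

theorem SigmaDirectionallyPorous.mono (hA : SigmaDirectionallyPorous A) (hBA : B ⊆ A) :
    SigmaDirectionallyPorous B := by
  obtain ⟨s, hs, rfl⟩ := hA
  refine ⟨fun n => s n ∩ B, fun n => (hs n).mono inter_subset_left, ?_⟩
  rw [← iUnion_inter, inter_eq_right.2 hBA]

theorem SigmaDirectionallyPorous.iUnion {ι : Type*} [Countable ι] {A : ι → Set X}
    (h : ∀ i, SigmaDirectionallyPorous (A i)) : SigmaDirectionallyPorous (⋃ i, A i) := by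
  rcases isEmpty_or_nonempty ι with hι | hι
  · rw [iUnion_of_empty]
    exact DirectionallyPorous.sigmaDirectionallyPorous (by simp [DirectionallyPorous])
  choose s hs hA using h
  obtain ⟨φ, hφ⟩ := exists_surjective_nat (ι × ℕ)
  refine ⟨fun n => s (φ n).1 (φ n).2, fun n => hs _ _, ?_⟩
  rw [hφ.iUnion_comp fun p => s p.1 p.2, iUnion_prod']
  simp_rw [hA]

theorem SigmaDirectionallyPorous.union (hA : SigmaDirectionallyPorous A)
    (hB : SigmaDirectionallyPorous B) : SigmaDirectionallyPorous (A ∪ B) := by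
  rw [union_eq_iUnion]
  exact .iUnion (Bool.forall_bool.2 ⟨hB, hA⟩)

end Porosity

section Assembly

variable {X Y : Type*} [NormedAddCommGroup X] [NormedSpace ℝ X]
  [NormedAddCommGroup Y] [NormedSpace ℝ Y]
  {f : X → Y} {x v : X} {L : Y} {K δ : ℝ}

theorem hasPosDirDeriv_smul
    (hneg : ∀ {v : X} {L : Y}, HasPosDirDeriv f x v L → HasPosDirDeriv f x (-v) (-L))
    (c : ℝ) (h : HasPosDirDeriv f x v L) : HasPosDirDeriv f x (c • v) (c • L) := by
  rcases lt_trichotomy c 0 with hc | rfl | hc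
  · simpa using (hneg h).smul (neg_pos.2 hc)
  · simpa using hasPosDirDeriv_zero
  · exact h.smul hc

theorem exists_hasPosDirDeriv_of_mem_span
    (hadd : ∀ {u v : X} {Lu Lv : Y}, HasPosDirDeriv f x u Lu → HasPosDirDeriv f x v Lv →
      HasPosDirDeriv f x (u + v) (Lu + Lv))
    (hneg : ∀ {v : X} {L : Y}, HasPosDirDeriv f x v L → HasPosDirDeriv f x (-v) (-L))
    {S : Set X} (hS : ∀ u ∈ S, ∃ L, HasPosDirDeriv f x u L) (hv : v ∈ Submodule.span ℝ S) :
    ∃ L, HasPosDirDeriv f x v L := by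
  induction hv using Submodule.span_induction with
  | mem u hu => exact hS u hu
  | zero => exact ⟨0, hasPosDirDeriv_zero⟩
  | add u w _ _ hu hw =>
    obtain ⟨Lu, hu⟩ := hu
    obtain ⟨Lw, hw⟩ := hw
    exact ⟨Lu + Lw, hadd hu hw⟩
  | smul c u _ hu =>
    obtain ⟨Lu, hu⟩ := hu
    exact ⟨c • Lu, hasPosDirDeriv_smul hneg c hu⟩

theorem exists_hasPosDirDeriv_of_mem_closure [CompleteSpace Y] {C : ℝ} (hC : 0 < C)
    (hcone : ∀ {w : X} {L : Y}, HasPosDirDeriv f x w L →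
      ∀ η > 0, ∃ r > 0, ConeApprox f x w L (C * η) r η)
    (hv : v ∈ closure {w | ∃ L, HasPosDirDeriv f x w L}) : ∃ L, HasPosDirDeriv f x v L := by
  refine exists_hasPosDirDeriv_of_forall_coneApprox fun ε hε => ?_
  obtain ⟨w, ⟨L, hw⟩, hvw⟩ := Metric.mem_closure_iff.1 hv (ε / C) (by positivity)
  obtain ⟨r, hr, hc⟩ := hcone hw (ε / C) (by positivity)
  refine ⟨L, r, hr, (hc.of_norm_sub_add_le ?_).mono (mul_div_cancel₀ ε hC.ne').le le_rfl le_rfl⟩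
  rw [add_zero, ← dist_eq_norm]
  exact hvw.le

theorem exists_clm_hasDirDeriv (hδ : 0 < δ) (hLip : LipschitzAtWith K δ f x)
    (hD : ∀ v, ∃ L, HasPosDirDeriv f x v L)
    (hadd : ∀ {u v : X} {Lu Lv : Y}, HasPosDirDeriv f x u Lu → HasPosDirDeriv f x v Lv →
      HasPosDirDeriv f x (u + v) (Lu + Lv))
    (hneg : ∀ {v : X} {L : Y}, HasPosDirDeriv f x v L → HasPosDirDeriv f x (-v) (-L)) :
    ∃ L : X →L[ℝ] Y, ∀ v, HasDirDeriv f x v (L v) := by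
  choose g hg using hD
  let ℓ : X →ₗ[ℝ] Y :=
    { toFun := g
      map_add' := fun u v => (hg (u + v)).unique (hadd (hg u) (hg v))
      map_smul' := fun c v => (hg (c • v)).unique (hasPosDirDeriv_smul hneg c (hg v)) }
  exact ⟨ℓ.mkContinuous K fun v => (hg v).norm_le hLip hδ,
    fun v => hasDirDeriv_of_hasPosDirDeriv_neg (hg v) (hneg (hg v))⟩

end Assembly

section Pieces

variable {X Y : Type*} [NormedAddCommGroup X] [NormedSpace ℝ X]
  [NormedAddCommGroup Y] [NormedSpace ℝ Y]
  {f : X → Y} {x z v : X} {L M : Y} {ε r ρ s t : ℝ}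

theorem exists_of_not_coneApprox (h : ¬ ConeApprox f x v L ε r ρ) :
    ∃ t ∈ Ioo 0 r, ∃ y, ‖y - (x + t • v)‖ ≤ ρ * t ∧ ε * t < ‖f y - f x - t • L‖ := by
  unfold ConeApprox at h
  push Not at h
  exact h

/-- Compare the derivatives through the points `x ≈ z + t • v` and `x + 2t • v ≈ z + 3t • v`. -/
theorem ConeApprox.norm_sub_le_of_mem_cone (hx : ConeApprox f x v L ε r 0)
    (hz : ConeApprox f z v M ε r ρ) (ht : 0 < t) (htr : 3 * t < r)
    (hxz : ‖x - (z + t • v)‖ ≤ ρ * t) : ‖L - M‖ ≤ 3 * ε := by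
  have hρ : 0 ≤ ρ := nonneg_of_mul_nonneg_left ((norm_nonneg _).trans hxz) ht
  set y := x + (2 * t) • v
  have hA := hz t ⟨ht, by linarith⟩ x hxz
  have hB : ‖f y - f z - (3 * t) • M‖ ≤ ε * (3 * t) := by
    refine hz (3 * t) ⟨by positivity, htr⟩ y ?_
    calc ‖y - (z + (3 * t) • v)‖ = ‖x - (z + t • v)‖ := by
          congr 1; simp only [y]; rw [show 3 * t = 2 * t + t by ring, add_smul]; abel
      _ ≤ ρ * (3 * t) := by nlinarith
  have hC : ‖f y - f x - (2 * t) • L‖ ≤ ε * (2 * t) :=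
    hx (2 * t) ⟨by positivity, by linarith⟩ y (by simp [y])
  have hsum : (2 * t) • (L - M) =
      (f y - f z - (3 * t) • M) - (f y - f x - (2 * t) • L) - (f x - f z - t • M) := by
    rw [show 3 * t = 2 * t + t by ring, add_smul, smul_sub]; abel
  have : 2 * t * ‖L - M‖ ≤ 2 * t * (3 * ε) := by
    calc 2 * t * ‖L - M‖ = ‖(2 * t) • (L - M)‖ := by
          rw [norm_smul, Real.norm_of_nonneg (by positivity)]
      _ ≤ ε * (3 * t) + ε * (2 * t) + ε * t := by
          rw [hsum]; grw [norm_sub_le, norm_sub_le, hA, hB, hC]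
      _ = 2 * t * (3 * ε) := by ring
  exact le_of_mul_le_mul_left this (by positivity)

/-- Compare the derivatives through the point `z + s • v`, which lies in the cone at `x`. -/
theorem ConeApprox.mul_norm_sub_le (hx : ConeApprox f x v L ε r ρ)
    (hz : ConeApprox f z v M ε r 0) (hs : s ∈ Ioo 0 r) (hxz : ‖z - x‖ ≤ ρ * s) :
    s * ‖L - M‖ ≤ 2 * ε * s + ‖f z - f x‖ := by
  set q := z + s • v
  have hA := hz s hs q (by simp [q])
  have hB : ‖f q - f x - s • L‖ ≤ ε * s := hx s hs q (by simpa [q] using hxz)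
  have hsum : s • (L - M) = (f q - f z - s • M) - (f q - f x - s • L) + (f z - f x) := by
    rw [smul_sub]; abel
  calc s * ‖L - M‖ = ‖s • (L - M)‖ := by rw [norm_smul, Real.norm_of_nonneg hs.1.le]
    _ ≤ ε * s + ε * s + ‖f z - f x‖ := by
        rw [hsum]; grw [norm_add_le, norm_sub_le, hA, hB]
    _ = 2 * ε * s + ‖f z - f x‖ := by ring

/- In the three sets below, `∀ r' > 0, ¬ ConeApprox …` says that an estimate fails at arbitrarily
small scales, and `v₀`, later taken from a dense sequence, pins a direction down so closely that
two points of the same set have comparable directions. The numerical constants are the ones for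
which the porosity estimates close. -/

def rayNonuniformSet (f : X → Y) (K δ r η : ℝ) : Set X :=
  {x | 0 < K ∧ 0 < δ ∧ 0 < r ∧ 0 < η ∧ LipschitzAtWith K δ f x ∧
    ∃ v L, ConeApprox f x v L (K * η) r 0 ∧ ∀ r' > 0, ¬ ConeApprox f x v L (3 * K * η) r' η}

def asymmetricSet (f : X → Y) (K δ r η : ℝ) (v₀ : X) : Set X :=
  {x | 0 < K ∧ 0 < δ ∧ 0 < r ∧ 0 < η ∧ LipschitzAtWith K δ f x ∧
    ∃ v L, ‖v - v₀‖ ≤ η / 90 ∧ ConeApprox f x v L (K * η / 5) r (η / 30) ∧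
      ∀ r' > 0, ¬ ConeApprox f x (-v) (-L) (2 * K * η) r' η}

def nonadditiveSet (f : X → Y) (K δ ε r : ℝ) (v₀ : X) : Set X :=
  {x | 0 < K ∧ 0 < δ ∧ 0 < ε ∧ 0 < r ∧ LipschitzAtWith K δ f x ∧
    ∃ u v Lu Lv, ‖u‖ ≤ 1 ∧ ‖v - v₀‖ ≤ ε / (24 * K) ∧
      ConeApprox f x u Lu ε r (ε / (6 * K)) ∧ ConeApprox f x v Lv ε r (ε / (6 * K)) ∧
      ∀ r' > 0, ¬ ConeApprox f x (u + v) (Lu + Lv) (5 * ε) r' 0}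

theorem directionallyPorous_rayNonuniformSet (f : X → Y) (K δ r η : ℝ) :
    DirectionallyPorous (rayNonuniformSet f K δ r η) := by
  refine .of_forall fun x ⟨hK, hδ, hr, hη, _, v, L, hray, hdev⟩ =>
    ⟨v, η / 2, by positivity, fun c hc => ?_⟩
  obtain ⟨t, ⟨ht, htc⟩, y, hy, hbad⟩ :=
    exists_of_not_coneApprox (hdev (min c (min r (δ / (2 * η)))) (by positivity))
  simp only [lt_min_iff, lt_div_iff₀ (by positivity : 0 < 2 * η)] at htc
  obtain ⟨htc, htr, htδ⟩ := htc
  refine ⟨t, ⟨ht, htc⟩, fun z hz ⟨_, _, _, _, hLipz, _⟩ => hbad.not_ge ?_⟩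
  rw [mem_ball_iff_norm] at hz
  have hyz : ‖f y - f z‖ ≤ K * (η * t + η / 2 * t) := by
    refine hLipz.norm_sub_le hK.le ?_ (by nlinarith)
    grw [norm_sub_le_norm_sub_add_norm_sub y (x + t • v) z, hy, norm_sub_rev, hz]
  have hvz : ‖f (x + t • v) - f z‖ ≤ K * (η / 2 * t) :=
    hLipz.norm_sub_le hK.le (by rw [norm_sub_rev]; exact hz.le) (by nlinarith)
  have hxv : ‖f (x + t • v) - f x - t • L‖ ≤ K * η * t := hray t ⟨ht, htr⟩ _ (by simp)
  calc ‖f y - f x - t • L‖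
      = ‖(f y - f z) - (f (x + t • v) - f z) + (f (x + t • v) - f x - t • L)‖ := by
        congr 1; abel
    _ ≤ 3 * K * η * t := by
        grw [norm_add_le, norm_sub_le, hyz, hvz, hxv]; linarith

theorem directionallyPorous_asymmetricSet (f : X → Y) (K δ r η : ℝ) (v₀ : X) :
    DirectionallyPorous (asymmetricSet f K δ r η v₀) := by
  refine .of_forall fun x ⟨hK, hδ, hr, hη, _, v, L, hv₀, hx, hdev⟩ =>
    ⟨-v, η / 90, by positivity, fun c hc => ?_⟩
  obtain ⟨t, ⟨ht, htc⟩, y, hy, hbad⟩ :=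
    exists_of_not_coneApprox (hdev (min c (min (r / 3) (δ / (2 * η)))) (by positivity))
  simp only [lt_min_iff, lt_div_iff₀ (by positivity : 0 < 2 * η),
    lt_div_iff₀ (by norm_num : (0 : ℝ) < 3)] at htc
  obtain ⟨htc, htr, htδ⟩ := htc
  refine ⟨t, ⟨ht, htc⟩, fun z hz ⟨_, _, _, _, hLipz, vz, M, hvz₀, hz', _⟩ => hbad.not_ge ?_⟩
  rw [mem_ball_iff_norm] at hz
  have hzv : ConeApprox f z v M (K * η / 5) r (η / 90) := hz'.of_norm_sub_add_le (by
    grw [norm_sub_le_norm_sub_add_norm_sub v v₀ vz, hv₀, norm_sub_rev, hvz₀]; linarith)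
  have hxz : ‖x - (z + t • v)‖ ≤ η / 90 * t := by
    calc ‖x - (z + t • v)‖ = ‖z - (x + t • -v)‖ := by
          rw [← norm_neg]; congr 1; rw [smul_neg]; abel
      _ ≤ η / 90 * t := hz.le
  have hM : ‖f x - f z - t • M‖ ≤ K * η / 5 * t := hzv t ⟨ht, by linarith⟩ x hxz
  have hLM : ‖L - M‖ ≤ 3 * (K * η / 5) :=
    (hx.mono le_rfl le_rfl (by positivity)).norm_sub_le_of_mem_cone hzv ht (by linarith) hxz
  have hyz : ‖f y - f z‖ ≤ K * (η * t + η / 90 * t) := by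
    refine hLipz.norm_sub_le hK.le ?_ (by nlinarith)
    grw [norm_sub_le_norm_sub_add_norm_sub y (x + t • -v) z, hy, norm_sub_rev, hz]
  calc ‖f y - f x - t • -L‖ = ‖(f y - f z) - (f x - f z - t • M) + t • (L - M)‖ := by
        congr 1; rw [smul_sub, smul_neg]; abel
    _ ≤ K * (η * t + η / 90 * t) + K * η / 5 * t + t * (3 * (K * η / 5)) := by
        grw [norm_add_le, norm_sub_le, hyz, hM, norm_smul, Real.norm_of_nonneg ht.le, hLM]
    _ ≤ 2 * K * η * t := by nlinarith [mul_pos (mul_pos hK hη) ht]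

theorem directionallyPorous_nonadditiveSet (f : X → Y) (K δ ε r : ℝ) (v₀ : X) :
    DirectionallyPorous (nonadditiveSet f K δ ε r v₀) := by
  refine .of_forall fun x ⟨hK, hδ, hε, hr, hLip, u, v, Lu, Lv, hu, hv₀, hxu, hxv, hdev⟩ =>
    ⟨u, ε / (6 * K) / 2, by positivity, fun c hc => ?_⟩
  set ρ := ε / (6 * K) with hρ
  have hρ0 : 0 < ρ := by positivity
  obtain ⟨t, ⟨ht, htc⟩, b, hb, hbad⟩ := exists_of_not_coneApprox
    (hdev (min c (min r (min (ρ * r / (1 + ρ / 2)) (δ / (1 + ρ / 2))))) (by positivity))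
  simp only [lt_min_iff, lt_div_iff₀ (by positivity : 0 < 1 + ρ / 2)] at htc
  obtain ⟨htc, htr, hts, htδ⟩ := htc
  refine ⟨t, ⟨ht, htc⟩, fun z hz ⟨_, _, _, _, _, _, vz, _, Lvz, _, hvz₀, _, hz', _⟩ =>
    hbad.not_ge ?_⟩
  rw [mem_ball_iff_norm] at hz
  obtain rfl : b = x + t • (u + v) := by simpa [sub_eq_zero] using hb
  have hzv : ConeApprox f z v Lvz ε r (ρ / 2) := hz'.of_norm_sub_add_le (by
    have : ε / (24 * K) + ε / (24 * K) + ρ / 2 = ρ := by rw [hρ]; field_simp; ring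
    grw [norm_sub_le_norm_sub_add_norm_sub v v₀ vz, hv₀, norm_sub_rev, hvz₀, this])
  have hzx : ‖z - x‖ ≤ (1 + ρ / 2) * t := by
    grw [norm_sub_le_norm_sub_add_norm_sub z (x + t • u) x, hz, add_sub_cancel_left, norm_smul,
      Real.norm_of_nonneg ht.le, hu]
    linarith
  have hLu : ‖f z - f x - t • Lu‖ ≤ ε * t :=
    hxu t ⟨ht, htr⟩ z (hz.le.trans (by gcongr; linarith))
  have hLvz : ‖f (x + t • (u + v)) - f z - t • Lvz‖ ≤ ε * t := by
    refine hzv t ⟨ht, htr⟩ _ ?_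
    calc ‖x + t • (u + v) - (z + t • v)‖ = ‖z - (x + t • u)‖ := by
          rw [← norm_neg]; congr 1; rw [smul_add]; abel
      _ ≤ ρ / 2 * t := hz.le
  set s := (1 + ρ / 2) * t / ρ
  have hs : s ∈ Ioo 0 r := ⟨by positivity, by rw [div_lt_iff₀ (by positivity)]; linarith⟩
  have hcmp := hxv.mul_norm_sub_le (hzv.mono le_rfl le_rfl (by positivity)) hs
    (hzx.trans_eq (by simp only [s]; field_simp))
  have hfzx := hLip.norm_sub_le hK.le hzx (by linarith)
  have hLv : ‖Lv - Lvz‖ ≤ 13 / 6 * ε := by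
    have hKs : K * ((1 + ρ / 2) * t) = ε / 6 * s := by simp only [s, hρ]; field_simp
    refine le_of_mul_le_mul_left ?_ hs.1
    linarith
  calc ‖f (x + t • (u + v)) - f x - t • (Lu + Lv)‖
      = ‖(f (x + t • (u + v)) - f z - t • Lvz) + (f z - f x - t • Lu) + t • (Lvz - Lv)‖ := by
        congr 1; rw [smul_sub, smul_add t Lu Lv]; abel
    _ ≤ ε * t + ε * t + t * (13 / 6 * ε) := by
        grw [norm_add₃_le, hLvz, hLu, norm_smul, Real.norm_of_nonneg ht.le, norm_sub_rev, hLv]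
    _ ≤ 5 * ε * t := by nlinarith [mul_pos hε ht]

end Pieces

section GoodPoint

variable {X Y : Type*} [NormedAddCommGroup X] [NormedSpace ℝ X]
  [NormedAddCommGroup Y] [NormedSpace ℝ Y]
  {f : X → Y} {x u v : X} {L Lu Lv : Y} {K δ : ℝ} {e : ℕ → X}

theorem exists_coneApprox_of_hasPosDirDeriv (hK : 0 < K) (hδ : 0 < δ)
    (hLip : LipschitzAtWith K δ f x) (hx : ∀ r η : ℚ, x ∉ rayNonuniformSet f K δ r η)
    (hv : HasPosDirDeriv f x v L) {η : ℝ} (hη : 0 < η) :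
    ∃ r > 0, ConeApprox f x v L (6 * K * η) r η := by
  by_contra! hdev
  obtain ⟨η₁, hηη₁, hη₁⟩ := exists_rat_btwn (by linarith : η < 2 * η)
  have hη₁0 : (0 : ℝ) < η₁ := hη.trans hηη₁
  obtain ⟨r₀, hr₀, hray⟩ := hasPosDirDeriv_iff_coneApprox.1 hv (K * η₁) (by positivity)
  obtain ⟨r, hr, hrr₀⟩ := exists_rat_btwn hr₀
  exact hx r η₁ ⟨hK, hδ, hr, hη₁0, hLip, v, L, hray.mono le_rfl hrr₀.le le_rfl,
    fun r' hr' hcone => hdev r' hr' (hcone.mono (by nlinarith) le_rfl hηη₁.le)⟩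

theorem hasPosDirDeriv_neg (hK : 0 < K) (hδ : 0 < δ) (hLip : LipschitzAtWith K δ f x)
    (he : DenseRange e) (hx₁ : ∀ r η : ℚ, x ∉ rayNonuniformSet f K δ r η)
    (hx₂ : ∀ (r η : ℚ) (i : ℕ), x ∉ asymmetricSet f K δ r η (e i))
    (hv : HasPosDirDeriv f x v L) : HasPosDirDeriv f x (-v) (-L) := by
  refine hasPosDirDeriv_iff_coneApprox.2 fun ε hε => ?_
  by_contra! hdev
  obtain ⟨η, hη, hηε⟩ := exists_rat_btwn (by positivity : 0 < ε / (2 * K))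
  obtain ⟨r₀, hr₀, hcone⟩ :=
    exists_coneApprox_of_hasPosDirDeriv hK hδ hLip hx₁ hv (η := η / 30) (by positivity)
  obtain ⟨r, hr, hrr₀⟩ := exists_rat_btwn hr₀
  obtain ⟨i, hi⟩ := he.exists_dist_lt v (by positivity : (0 : ℝ) < η / 90)
  rw [lt_div_iff₀ (by positivity)] at hηε
  exact hx₂ r η i ⟨hK, hδ, hr, hη, hLip, v, L, dist_eq_norm v (e i) ▸ hi.le,
    hcone.mono (by linarith) hrr₀.le le_rfl,
    fun r' hr' h => hdev r' hr' (h.mono (by linarith) le_rfl (by positivity))⟩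

theorem hasPosDirDeriv_add (hK : 0 < K) (hδ : 0 < δ) (hLip : LipschitzAtWith K δ f x)
    (he : DenseRange e) (hx₁ : ∀ r η : ℚ, x ∉ rayNonuniformSet f K δ r η)
    (hx₃ : ∀ (ε r : ℚ) (i : ℕ), x ∉ nonadditiveSet f K δ ε r (e i))
    (hu : HasPosDirDeriv f x u Lu) (hv : HasPosDirDeriv f x v Lv) :
    HasPosDirDeriv f x (u + v) (Lu + Lv) := by
  suffices key : ∀ {u : X} {Lu : Y}, ‖u‖ ≤ 1 → HasPosDirDeriv f x u Lu →
      ∀ {v : X} {Lv : Y}, HasPosDirDeriv f x v Lv → HasPosDirDeriv f x (u + v) (Lu + Lv) by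
    have hc : 0 < (‖u‖ + 1)⁻¹ := by positivity
    have hcu : ‖(‖u‖ + 1)⁻¹ • u‖ ≤ 1 := by
      rw [norm_smul, Real.norm_of_nonneg hc.le, inv_mul_le_one₀ (by positivity)]
      linarith
    have := (key hcu (hu.smul hc) (hv.smul hc)).smul (inv_pos.2 hc)
    rwa [← smul_add, ← smul_add, inv_smul_smul₀ hc.ne', inv_smul_smul₀ hc.ne'] at this
  intro u Lu hu₁ hu v Lv hv
  refine hasPosDirDeriv_iff_coneApprox.2 fun ε₀ hε₀ => ?_
  by_contra! hdev
  obtain ⟨ε, hε, hεε₀⟩ := exists_rat_btwn (by positivity : (0 : ℝ) < ε₀ / 5)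
  have hscale : 6 * K * (ε / (6 * K)) = ε := by field_simp
  obtain ⟨ru, hru, hcu⟩ :=
    exists_coneApprox_of_hasPosDirDeriv hK hδ hLip hx₁ hu (η := ε / (6 * K)) (by positivity)
  obtain ⟨rv, hrv, hcv⟩ :=
    exists_coneApprox_of_hasPosDirDeriv hK hδ hLip hx₁ hv (η := ε / (6 * K)) (by positivity)
  obtain ⟨r, hr, hrr⟩ := exists_rat_btwn (lt_min hru hrv)
  obtain ⟨i, hi⟩ := he.exists_dist_lt v (by positivity : (0 : ℝ) < ε / (24 * K))
  exact hx₃ ε r i ⟨hK, hδ, hε, hr, hLip, u, v, Lu, Lv, hu₁, dist_eq_norm v (e i) ▸ hi.le,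
    hcu.mono hscale.le (hrr.le.trans (min_le_left _ _)) le_rfl,
    hcv.mono hscale.le (hrr.le.trans (min_le_right _ _)) le_rfl,
    fun r' hr' h => hdev r' hr' (h.mono (by linarith) le_rfl le_rfl)⟩

def exceptionalSet (f : X → Y) (e : ℕ → X) (K δ : ℝ) : Set X :=
  (⋃ (r : ℚ) (η : ℚ), rayNonuniformSet f K δ r η) ∪
    (⋃ (r : ℚ) (η : ℚ) (i : ℕ), asymmetricSet f K δ r η (e i)) ∪
    ⋃ (ε : ℚ) (r : ℚ) (i : ℕ), nonadditiveSet f K δ ε r (e i)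

theorem sigmaDirectionallyPorous_exceptionalSet (f : X → Y) (e : ℕ → X) (K δ : ℝ) :
    SigmaDirectionallyPorous (exceptionalSet f e K δ) := by
  refine .union (.union ?_ ?_) ?_ <;> refine .iUnion fun _ => .iUnion fun _ => ?_
  · exact (directionallyPorous_rayNonuniformSet f _ _ _ _).sigmaDirectionallyPorous
  · exact .iUnion fun _ => (directionallyPorous_asymmetricSet f _ _ _ _ _).sigmaDirectionallyPorous
  · exact .iUnion fun _ => (directionallyPorous_nonadditiveSet f _ _ _ _ _).sigmaDirectionallyPorous

theorem exists_clm_hasDirDeriv_of_notMem_exceptionalSet [CompleteSpace Y] (he : DenseRange e)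
    (hK : 0 < K) (hδ : 0 < δ) (hLip : LipschitzAtWith K δ f x)
    (hx : x ∉ exceptionalSet f e K δ) {S : Set X}
    (hS : Dense (Submodule.span ℝ S : Set X)) (hder : ∀ u ∈ S, ∃ L, HasPosDirDeriv f x u L) :
    ∃ L : X →L[ℝ] Y, ∀ v, HasDirDeriv f x v (L v) := by
  simp only [exceptionalSet, mem_union, mem_iUnion, not_or, not_exists] at hx
  obtain ⟨⟨hx₁, hx₂⟩, hx₃⟩ := hx
  have hneg {v : X} {L : Y} := hasPosDirDeriv_neg (v := v) (L := L) hK hδ hLip he hx₁ hx₂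
  have hadd {u v : X} {Lu Lv : Y} :=
    hasPosDirDeriv_add (u := u) (v := v) (Lu := Lu) (Lv := Lv) hK hδ hLip he hx₁ hx₃
  have hdense : Dense {w | ∃ L, HasPosDirDeriv f x w L} :=
    hS.mono fun w hw => exists_hasPosDirDeriv_of_mem_span hadd hneg hder hw
  refine exists_clm_hasDirDeriv hδ hLip (fun v => ?_) hadd hneg
  exact exists_hasPosDirDeriv_of_mem_closure (by positivity)
    (exists_coneApprox_of_hasPosDirDeriv hK hδ hLip hx₁) (hdense.closure_eq ▸ mem_univ v)

end GoodPoint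

theorem stmt14_general {X Y : Type*} [NormedAddCommGroup X] [NormedSpace ℝ X]
    [TopologicalSpace.SeparableSpace X]
    [NormedAddCommGroup Y] [NormedSpace ℝ Y] [CompleteSpace Y]
    (G : Set X) (f : X → Y) :
    ∃ A : Set X, SigmaDirectionallyPorous A ∧ A ⊆ G ∧
      ∀ x ∈ G \ A, LipschitzAtPt f x →
        ∀ S : Set X, Dense ((Submodule.span ℝ S : Submodule ℝ X) : Set X) →
          (∀ u ∈ S, ∃ L, HasPosDirDeriv f x u L) →
          ∃ L : X →L[ℝ] Y, ∀ v, HasDirDeriv f x v (L v) := by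
  set e := TopologicalSpace.denseSeq X
  refine ⟨G ∩ ⋃ (K : ℚ) (δ : ℚ), exceptionalSet f e K δ,
    (SigmaDirectionallyPorous.iUnion fun K : ℚ => .iUnion fun δ : ℚ =>
      sigmaDirectionallyPorous_exceptionalSet f e K δ).mono inter_subset_right,
    inter_subset_left, ?_⟩
  rintro x ⟨hxG, hxA⟩ hLip S hS hder
  obtain ⟨K, δ, hK, hδ, hLipKδ⟩ := hLip.exists_rat
  exact exists_clm_hasDirDeriv_of_notMem_exceptionalSet (TopologicalSpace.denseRange_denseSeq X)
    (by exact_mod_cast hK) (by exact_mod_cast hδ) hLipKδ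
    (fun hx => hxA ⟨hxG, mem_iUnion₂.2 ⟨K, δ, hx⟩⟩) hS hder

theorem stmt14 {X Y : Type*} [NormedAddCommGroup X] [NormedSpace ℝ X] [CompleteSpace X]
    [TopologicalSpace.SeparableSpace X]
    [NormedAddCommGroup Y] [NormedSpace ℝ Y] [CompleteSpace Y]
    (G : Set X) (hG : IsOpen G) (f : X → Y) :
    ∃ A : Set X, SigmaDirectionallyPorous A ∧ A ⊆ G ∧
      ∀ x ∈ G \ A, LipschitzAtPt f x →
        ∀ S : Set X, Dense ((Submodule.span ℝ S : Submodule ℝ X) : Set X) →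
          (∀ u ∈ S, ∃ L, HasPosDirDeriv f x u L) →
          ∃ L : X →L[ℝ] Y, ∀ v, HasDirDeriv f x v (L v) :=
  stmt14_general G f
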